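/- Let ℓ ≥ 2, write k = k_d · k_ℓ where gcd(k_ℓ, ℓ) = 1 and every prime factor of k_d divides d, assume gcd(k, ℓ/d) = 1 and d | ℓ. Let m be the product of the primes dividing d but not dividing k_d, and set n = m·(ℓ/d) + k_d. Then gcd(n, ℓ) = 1 and k ≡ n·k_ℓ (mod ℓ/d). -/
import Mathlib


theorem stmt_10 (ℓ d k kd kl : ℕ) (hℓ : 2 ≤ ℓ) (hd : d ∣ ℓ) (hk : 0 < k)
    (hfac : k = kd * kl) (hkl : Nat.gcd kl ℓ = 1)
    (hkd : ∀ p : ℕ, p.Prime → p ∣ kd → p ∣ d)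
    (hgcd : Nat.gcd k (ℓ / d) = 1) :
    Nat.gcd ((∏ p ∈ d.primeFactors.filter (fun p => ¬ p ∣ kd), p) * (ℓ / d) + kd) ℓ = 1 ∧
      k ≡ ((∏ p ∈ d.primeFactors.filter (fun p => ¬ p ∣ kd), p) * (ℓ / d) + kd) * kl
        [MOD ℓ / d] := by
  set m := ∏ p ∈ d.primeFactors.filter (fun p => ¬ p ∣ kd), p with hm
  have hℓ0 : 0 < ℓ := by omega
  have hd0 : 0 < d := Nat.pos_of_dvd_of_pos hd hℓ0
  have hkd0 : kd ≠ 0 := by rintro rfl; simp at hfac; omega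
  have hmdvd : ∀ p : ℕ, p.Prime → (p ∣ m ↔ (p ∣ d ∧ ¬ p ∣ kd)) := by
    intro p hp
    rw [hm, hp.prime.dvd_finset_prod_iff]
    constructor
    · rintro ⟨q, hq, hpq⟩
      simp only [Finset.mem_filter, Nat.mem_primeFactors] at hq
      have : p = q := ((Nat.prime_dvd_prime_iff_eq hp hq.1.1).mp hpq)
      subst this
      exact ⟨hq.1.2.1, hq.2⟩
    · rintro ⟨h1, h2⟩
      exact ⟨p, by simp [Finset.mem_filter, Nat.mem_primeFactors, hp, h1, h2, hd0.ne'], dvd_rfl⟩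
  have hldd : d * (ℓ / d) = ℓ := Nat.mul_div_cancel' hd
  constructor
  · by_contra h
    obtain ⟨p, hp, hpg⟩ := Nat.exists_prime_and_dvd h
    have hpn : p ∣ m * (ℓ / d) + kd := hpg.trans (Nat.gcd_dvd_left _ _)
    have hpl : p ∣ ℓ := hpg.trans (Nat.gcd_dvd_right _ _)
    by_cases hpd : p ∣ d
    · by_cases hpk : p ∣ kd
      · have hpm : ¬ p ∣ m := fun h => ((hmdvd p hp).mp h).2 hpk
        have hpml : p ∣ m * (ℓ / d) := (Nat.dvd_add_right hpk).mp (by rwa [add_comm] at hpn)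
        rcases hp.dvd_mul.mp hpml with h | h
        · exact hpm h
        · have hpk' : p ∣ k := hpk.trans ⟨kl, hfac⟩
          have : p ∣ Nat.gcd k (ℓ / d) := Nat.dvd_gcd hpk' h
          rw [hgcd] at this
          exact hp.one_lt.ne' (Nat.eq_one_of_dvd_one this) |>.elim
      · have hpm : p ∣ m := (hmdvd p hp).mpr ⟨hpd, hpk⟩
        have : p ∣ kd := (Nat.dvd_add_right (hpm.mul_right _)).mp hpn
        exact hpk this
    · have hpld : p ∣ ℓ / d := by
        rcases (hp.dvd_mul.mp (hldd ▸ hpl)) with h | h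
        · exact absurd h hpd
        · exact h
      have hpkd : p ∣ kd := (Nat.dvd_add_right (Dvd.dvd.mul_left hpld m)).mp hpn
      exact hpd (hkd p hp hpkd)
  · have : (m * (ℓ / d) + kd) * kl ≡ (0 + kd) * kl [MOD ℓ / d] :=
      Nat.ModEq.mul_right _ (Nat.ModEq.add_right _ ((Nat.modEq_zero_iff_dvd).mpr ⟨m, mul_comm _ _⟩))
    simpa [hfac] using this.symm
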